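/- Let D be an oriented graph with no induced TT3 and no induced S_{k,k}, and suppose every digraph in this class admits a triangle-free colouring with at most m colours. Then χ(D) ≤ (4k-2)·m. -/

import Mathlib

/-!
Fix a triangle-free colouring `f`. Inside a colour class no vertex has `k` in-neighbours and `k`
out-neighbours: those `2k` vertices would be pairwise non-adjacent, since an arc among them closes
a transitive triangle or a monochromatic directed triangle, so with the vertex they would induce
`S_{k,k}`. Splitting each class by which of the two monochromatic degrees is below `k` gives `2m`
parts, each with an orientation of out-degree at most `k - 1`. Such a part is
`2(k - 1)`-degenerate, hence greedily `(2k - 1)`-colourable.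
-/

/-- The underlying simple graph of a digraph given by its arc relation. -/
def underlying {V : Type*} (A : V → V → Prop) : SimpleGraph V where
  Adj x y := x ≠ y ∧ (A x y ∨ A y x)
  symm := ⟨fun x y h => ⟨h.1.symm, h.2.symm⟩⟩
  loopless := ⟨fun x h => h.1 rfl⟩

/-- `A` admits a colouring with `c` colours in which no directed triangle is
monochromatic. -/
def TriFreeColorable {V : Type*} (A : V → V → Prop) (c : ℕ) : Prop :=
  ∃ f : V → Fin c, ∀ u v w : V, A u v → A v w → A w u →
    ¬ (f u = f v ∧ f v = f w)

open Finset

namespace SimpleGraph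

variable {V : Type*} {G H₁ H₂ : SimpleGraph V}

theorem Colorable.mul_of_le_sup {a b : ℕ} (h : G ≤ H₁ ⊔ H₂) (h₁ : H₁.Colorable a)
    (h₂ : H₂.Colorable b) : G.Colorable (a * b) := by
  obtain ⟨C₁⟩ := h₁
  obtain ⟨C₂⟩ := h₂
  let C : G.Coloring (Fin a × Fin b) := Coloring.mk (fun v => (C₁ v, C₂ v)) fun hadj heq => by
    rcases h hadj with hadj | hadj
    · exact C₁.valid hadj (congrArg Prod.fst heq)
    · exact C₂.valid hadj (congrArg Prod.snd heq)
  simpa using C.colorable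

/-- `G \ (⊤ : SimpleGraph ι).comap key` keeps the edges of `G` whose ends have the same key. -/
theorem colorable_mul_card_of_sdiff_comap {ι : Type*} [Fintype ι] (key : V → ι) {c : ℕ}
    (h : (G \ (⊤ : SimpleGraph ι).comap key).Colorable c) :
    G.Colorable (c * Fintype.card ι) :=
  h.mul_of_le_sup le_sdiff_sup (Coloring.mk key fun hadj => hadj).colorable

variable [DecidableRel G.Adj]

theorem exists_natColoring_on_of_forall_exists_degree_lt {c : ℕ}
    (h : ∀ t : Finset V, t.Nonempty → ∃ v ∈ t, #{u ∈ t | G.Adj v u} < c) (s : Finset V) :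
    ∃ g : V → ℕ, (∀ u ∈ s, g u < c) ∧ ∀ u ∈ s, ∀ w ∈ s, G.Adj u w → g u ≠ g w := by
  classical
  induction s using Finset.strongInduction with
  | _ s ih =>
  rcases s.eq_empty_or_nonempty with rfl | hs
  · exact ⟨0, by simp, by simp⟩
  obtain ⟨v, hv, hdeg⟩ := h s hs
  obtain ⟨g, hgc, hg⟩ := ih (s.erase v) (erase_ssubset hv)
  obtain ⟨a, ha, hfree⟩ := exists_mem_notMem_of_card_lt_card
    (s := image g {u ∈ s | G.Adj v u}) (t := range c) (by simpa using card_image_le.trans_lt hdeg)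
  rw [mem_range] at ha
  have hne : ∀ u ∈ s, G.Adj v u → g u ≠ a := fun u hu hvu hua =>
    hfree (mem_image.mpr ⟨u, mem_filter.mpr ⟨hu, hvu⟩, hua⟩)
  refine ⟨Function.update g v a, fun u hu => ?_, fun u hu w hw huw => ?_⟩
  · rcases eq_or_ne u v with rfl | huv
    · simpa using ha
    · simpa [huv] using hgc u (mem_erase.mpr ⟨huv, hu⟩)
  · rcases eq_or_ne u v with rfl | huv
    · simpa [huw.ne'] using (hne w hw huw).symm
    rcases eq_or_ne w v with rfl | hwv
    · simpa [huv] using hne u hu huw.symm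
    simpa [huv, hwv] using hg u (mem_erase.mpr ⟨huv, hu⟩) w (mem_erase.mpr ⟨hwv, hw⟩) huw

variable [Fintype V]

theorem colorable_of_forall_exists_degree_lt {c : ℕ}
    (h : ∀ t : Finset V, t.Nonempty → ∃ v ∈ t, #{u ∈ t | G.Adj v u} < c) : G.Colorable c := by
  obtain ⟨g, hgc, hg⟩ := exists_natColoring_on_of_forall_exists_degree_lt h univ
  exact (colorable_iff_exists_bdd_nat_coloring c).mpr
    ⟨Coloring.mk g fun huw => hg _ (mem_univ _) _ (mem_univ _) huw, fun v => hgc v (mem_univ v)⟩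

variable {O : V → V → Prop} [DecidableRel O] {k : ℕ}

theorem exists_degree_lt_of_outDegree_lt (hO : ∀ u w, G.Adj u w → O u w ∨ O w u)
    (hout : ∀ v, #{u | G.Adj v u ∧ O v u} < k) {t : Finset V} (ht : t.Nonempty) :
    ∃ v ∈ t, #{u ∈ t | G.Adj v u} < 2 * k - 1 := by
  have hk : 0 < k := (hout ht.choose).pos
  set out : V → ℕ := fun v => #{u ∈ t | G.Adj v u ∧ O v u}
  have hout_t : ∀ v, out v ≤ k - 1 := fun v =>
    Nat.le_sub_one_of_lt ((card_le_card fun u hu => by simp_all).trans_lt (hout v))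
  have hdeg : ∀ v, #{u ∈ t | G.Adj v u} ≤ out v + #{u ∈ t | G.Adj u v ∧ O u v} := by
    classical
    intro v
    refine (card_le_card fun u hu => ?_).trans (card_union_le _ _)
    simp only [mem_filter, mem_union] at hu ⊢
    rcases hO v u hu.2 with h | h
    exacts [Or.inl ⟨hu.1, hu.2, h⟩, Or.inr ⟨hu.1, hu.2.symm, h⟩]
  have hswap : ∑ v ∈ t, #{u ∈ t | G.Adj u v ∧ O u v} = ∑ v ∈ t, out v :=
    (sum_card_bipartiteAbove_eq_sum_card_bipartiteBelow (fun u v => G.Adj u v ∧ O u v)).symm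
  refine exists_lt_of_sum_lt ?_
  calc ∑ v ∈ t, #{u ∈ t | G.Adj v u}
      ≤ ∑ v ∈ t, (out v + #{u ∈ t | G.Adj u v ∧ O u v}) := sum_le_sum fun v _ => hdeg v
    _ = 2 * ∑ v ∈ t, out v := by rw [sum_add_distrib, hswap, two_mul]
    _ ≤ 2 * ∑ _v ∈ t, (k - 1) := by gcongr with v; exact hout_t v
    _ < ∑ _v ∈ t, (2 * k - 1) := by
      simp only [sum_const, smul_eq_mul]
      have := ht.card_pos
      zify [hk, show 1 ≤ 2 * k by omega]
      nlinarith

theorem colorable_of_outDegree_lt (hO : ∀ u w, G.Adj u w → O u w ∨ O w u)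
    (hout : ∀ v, #{u | G.Adj v u ∧ O v u} < k) : G.Colorable (2 * k - 1) :=
  colorable_of_forall_exists_degree_lt fun _ ht => exists_degree_lt_of_outDegree_lt hO hout ht

end SimpleGraph

section TriangleFreeColouring

variable {V α : Type*} [Fintype V] {A : V → V → Prop} [DecidableRel A] {f : V → α}
  [DecidableEq α] {k : ℕ}

def monoOutNbhd (A : V → V → Prop) [DecidableRel A] (f : V → α) (v : V) : Finset V :=
  {u | A v u ∧ f u = f v}

def monoInNbhd (A : V → V → Prop) [DecidableRel A] (f : V → α) (v : V) : Finset V :=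
  {u | A u v ∧ f u = f v}

theorem not_arc_of_mem_monoNbhd [DecidableEq V] (hTT3 : ¬ ∃ u v w : V, A u v ∧ A v w ∧ A u w)
    (hf : ∀ u v w, A u v → A v w → A w u → ¬ (f u = f v ∧ f v = f w)) {v a b : V}
    (ha : a ∈ monoInNbhd A f v ∪ monoOutNbhd A f v)
    (hb : b ∈ monoInNbhd A f v ∪ monoOutNbhd A f v) : ¬ A a b := by
  simp only [monoInNbhd, monoOutNbhd, mem_union, mem_filter, mem_univ, true_and] at ha hb
  intro hab
  rcases ha with ⟨hav, -⟩ | ⟨hva, hfa⟩ <;> rcases hb with ⟨hbv, hfb⟩ | ⟨hvb, -⟩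
  · exact hTT3 ⟨a, b, v, hab, hbv, hav⟩
  · exact hTT3 ⟨a, v, b, hav, hvb, hab⟩
  · exact hf v a b hva hab hbv ⟨hfa.symm, hfa.trans hfb.symm⟩
  · exact hTT3 ⟨v, a, b, hva, hab, hvb⟩

theorem exists_induced_star_of_le_card [DecidableEq V]
    (hTT3 : ¬ ∃ u v w : V, A u v ∧ A v w ∧ A u w)
    (hf : ∀ u v w, A u v → A v w → A w u → ¬ (f u = f v ∧ f v = f w)) {v : V}
    (hin : k ≤ #(monoInNbhd A f v)) (hout : k ≤ #(monoOutNbhd A f v)) :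
    ∃ (x : V) (s t : Finset V), s.card = k ∧ t.card = k ∧
      (∀ y ∈ s, A y x) ∧ (∀ y ∈ t, A x y) ∧
      (∀ y ∈ s ∪ t, ∀ z ∈ s ∪ t, y ≠ z → ¬ (underlying A).Adj y z) := by
  obtain ⟨s, hs, hsk⟩ := exists_subset_card_eq hin
  obtain ⟨t, ht, htk⟩ := exists_subset_card_eq hout
  have hst : s ∪ t ⊆ monoInNbhd A f v ∪ monoOutNbhd A f v := union_subset_union hs ht
  refine ⟨v, s, t, hsk, htk, fun y hy => ?_, fun y hy => ?_, fun y hy z hz _ hyz => ?_⟩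
  · exact (mem_filter.mp (hs hy)).2.1
  · exact (mem_filter.mp (ht hy)).2.1
  · rcases hyz.2 with h | h
    exacts [not_arc_of_mem_monoNbhd hTT3 hf (hst hy) (hst hz) h,
      not_arc_of_mem_monoNbhd hTT3 hf (hst hz) (hst hy) h]

theorem colorable_sdiff_comap_of_card_monoNbhd_lt
    (hsmall : ∀ v, #(monoOutNbhd A f v) < k ∨ #(monoInNbhd A f v) < k) :
    (underlying A \ (⊤ : SimpleGraph (α × Bool)).comap
      fun v => (f v, decide (#(monoOutNbhd A f v) < k))).Colorable (2 * k - 1) := by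
  classical
  set lowOut : V → Prop := fun v => #(monoOutNbhd A f v) < k
  -- both ends of a remaining edge lie on the same side; orient it so that the small
  -- monochromatic neighbourhood is the out-neighbourhood
  apply SimpleGraph.colorable_of_outDegree_lt (O := fun u w => if lowOut u then A u w else A w u)
  · rintro u w ⟨⟨-, huw⟩, hkey⟩
    simp only [SimpleGraph.comap_adj, SimpleGraph.top_adj, ne_eq, not_not, Prod.ext_iff,
      decide_eq_decide] at hkey
    by_cases hu : lowOut u
    · rw [if_pos hu, if_pos (hkey.2.mp hu)]
      exact huw
    · rw [if_neg hu, if_neg (mt hkey.2.mpr hu)]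
      exact huw.symm
  · intro v
    by_cases hv : lowOut v
    · refine (card_le_card fun u hu => ?_).trans_lt hv
      simp_all [monoOutNbhd, Prod.ext_iff]
    · refine (card_le_card fun u hu => ?_).trans_lt ((hsmall v).resolve_left hv)
      simp_all [monoInNbhd, Prod.ext_iff]

end TriangleFreeColouring

theorem stmt11_general {V : Type*} [Fintype V] [DecidableEq V] (k m : ℕ)
    (A : V → V → Prop)
    (hTT3 : ¬ ∃ u v w : V, A u v ∧ A v w ∧ A u w)
    (hSkk : ¬ ∃ (x : V) (s t : Finset V), s.card = k ∧ t.card = k ∧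
      (∀ y ∈ s, A y x) ∧ (∀ y ∈ t, A x y) ∧
      (∀ y ∈ s ∪ t, ∀ z ∈ s ∪ t, y ≠ z → ¬ (underlying A).Adj y z))
    (hm : TriFreeColorable A m) :
    (underlying A).chromaticNumber ≤ (((4 * k - 2) * m : ℕ) : ℕ∞) := by
  classical
  obtain ⟨f, hf⟩ := hm
  have hsmall : ∀ v, #(monoOutNbhd A f v) < k ∨ #(monoInNbhd A f v) < k := fun v => by
    by_contra! h
    exact hSkk (exists_induced_star_of_le_card hTT3 hf h.2 h.1)
  have hcol := SimpleGraph.colorable_mul_card_of_sdiff_comap _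
    (colorable_sdiff_comap_of_card_monoNbhd_lt hsmall)
  rw [Fintype.card_prod, Fintype.card_fin, Fintype.card_bool] at hcol
  refine (hcol.mono (le_of_eq ?_)).chromaticNumber_le
  rw [show 4 * k - 2 = (2 * k - 1) * 2 by omega]
  ring

theorem stmt11 {V : Type*} [Fintype V] [DecidableEq V] (k m : ℕ) (hk : 1 ≤ k)
    (A : V → V → Prop) (hasym : ∀ x y, A x y → ¬ A y x)
    (hTT3 : ¬ ∃ u v w : V, A u v ∧ A v w ∧ A u w)
    (hSkk : ¬ ∃ (x : V) (s t : Finset V), s.card = k ∧ t.card = k ∧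
      (∀ y ∈ s, A y x) ∧ (∀ y ∈ t, A x y) ∧
      (∀ y ∈ s ∪ t, ∀ z ∈ s ∪ t, y ≠ z → ¬ (underlying A).Adj y z))
    (hm : TriFreeColorable A m) :
    (underlying A).chromaticNumber ≤ (((4 * k - 2) * m : ℕ) : ℕ∞) :=
  stmt11_general k m A hTT3 hSkk hm
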